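/- arXiv:2505.15992 — 2 statements merged into one kernel-verified Lean document; each statement's English description precedes it below -/
import Mathlib

section
/- Two Boolean vectors u, v ∈ {0,1}^d are orthogonal (∑_j u[j]·v[j] = 0) if and only if d_H(μ(u), τ(v)) ≤ d, where μ and τ are applied letterwise (μ(0)=0111000, μ(1)=0001000, τ(0)=0011000, τ(1)=1111000) and d_H denotes Hamming distance between the resulting strings of length 7d. -/
/-- `μ(0) = 0111000`, `μ(1) = 0001000`. -/
def muMorph : Bool → Fin 7 → Bool
  | false => ![false, true, true, true, false, false, false]
  | true  => ![false, false, false, true, false, false, false]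

/-- `τ(0) = 0011000`, `τ(1) = 1111000`. -/
def tauMorph : Bool → Fin 7 → Bool
  | false => ![false, false, true, true, false, false, false]
  | true  => ![true, true, true, true, false, false, false]

/-- Letterwise application of a morphism to a Boolean vector of length `d`,
producing a string of length `7d` (indexed by `Fin d × Fin 7`). -/
def applyMorph (f : Bool → Fin 7 → Bool) {d : ℕ} (u : Fin d → Bool) :
    Fin d × Fin 7 → Bool :=
  fun p => f (u p.1) p.2

theorem hammingDist_applyMorph (f g : Bool → Fin 7 → Bool) {d : ℕ}
    (u v : Fin d → Bool) :
    hammingDist (applyMorph f u) (applyMorph g v) = ∑ j, hammingDist (f (u j)) (g (v j)) := by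
  simp only [hammingDist, Finset.card_filter]
  rw [Fintype.sum_prod_type]
  rfl

theorem hammingDist_muMorph_tauMorph (a b : Bool) :
    hammingDist (muMorph a) (tauMorph b) =
      1 + 2 * ((if a then 1 else 0) * (if b then 1 else 0)) := by
  decide +revert

theorem hammingDist_applyMorph_muMorph_tauMorph {d : ℕ} (u v : Fin d → Bool) :
    hammingDist (applyMorph muMorph u) (applyMorph tauMorph v) =
      d + 2 * ∑ j, (if u j then 1 else 0) * (if v j then 1 else 0) := by
  simp only [hammingDist_applyMorph, hammingDist_muMorph_tauMorph, Finset.sum_add_distrib,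
    Finset.mul_sum, Finset.sum_const, Finset.card_univ, Fintype.card_fin, smul_eq_mul, mul_one]

/-- Two Boolean vectors `u, v ∈ {0,1}^d` are orthogonal iff
`d_H(μ(u), τ(v)) ≤ d`. -/
theorem orthogonal_iff_hamming_le {d : ℕ} (u v : Fin d → Bool) :
    (∑ j : Fin d, (if u j then 1 else 0) * (if v j then 1 else 0) = 0) ↔
    hammingDist (applyMorph muMorph u) (applyMorph tauMorph v) ≤ d := by
  rw [hammingDist_applyMorph_muMorph_tauMorph]
  omega
end

section
/- Consider Boolean vectors u, v ∈ {0,1}^d and morphisms τ_i, τ_j (i ≠ j) from the Rk-LCSS gadget, where d_H(τ_i(a), τ_j(b)) = 3 if (a,b) ≠ (1,1) and 5 if (a,b) = (1,1). Then d_H(τ_i(u), τ_j(v)) = 3d + 2·|{p : u[p] = v[p] = 1}|; in particular, d_H(τ_i(u), τ_j(v)) ≤ 3d if and only if u and v are orthogonal. -/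
/-- Hamming distance between two lists (counting differing aligned positions). -/
def listHamming (s t : List Bool) : ℕ :=
  (List.zipWith (fun a b => if a = b then 0 else 1) s t).sum

lemma listHamming_append {s₁ s₂ t₁ t₂ : List Bool} (h : s₁.length = t₁.length) :
    listHamming (s₁ ++ s₂) (t₁ ++ t₂) = listHamming s₁ t₁ + listHamming s₂ t₂ := by
  rw [listHamming, List.zipWith_append h, List.sum_append, listHamming, listHamming]

lemma listHamming_ofFn_flatMap {α β : Type*} {d : ℕ} (u : Fin d → α) (v : Fin d → β)
    (f : α → List Bool) (g : β → List Bool) (hlen : ∀ a b, (f a).length = (g b).length) :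
    listHamming ((List.ofFn u).flatMap f) ((List.ofFn v).flatMap g) =
      ∑ p, listHamming (f (u p)) (g (v p)) := by
  induction d with
  | zero => rfl
  | succ n ih =>
    rw [List.ofFn_succ, List.ofFn_succ, List.flatMap_cons, List.flatMap_cons,
      listHamming_append (hlen _ _), ih, Fin.sum_univ_succ]

lemma sum_ite_add_eq_mul_card_add_mul_card_filter {ι : Type*} [Fintype ι] (P : ι → Prop)
    [DecidablePred P] (a b : ℕ) :
    ∑ i, (if P i then a + b else a) = a * Fintype.card ι + b * (Finset.univ.filter P).card := by
  calc ∑ i, (if P i then a + b else a) = ∑ i, (a + if P i then b else 0) := by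
        congr! 1 with i; split_ifs <;> rfl
    _ = _ := by
        rw [Finset.sum_add_distrib, Finset.sum_ite, Finset.sum_const_zero, add_zero,
          Finset.sum_const, Finset.sum_const, Finset.card_univ, smul_eq_mul, smul_eq_mul,
          mul_comm, mul_comm b]

/-- For morphisms `τ_i, τ_j` (`i ≠ j`) of the `Rk`-LCSS gadget, with
`d_H(τ_i(a), τ_j(b)) = 3` unless `a = b = 1` in which case it is `5`, we get
`d_H(τ_i(u), τ_j(v)) = 3d + 2·|{p : u[p] = v[p] = 1}|`; in particular,
`d_H(τ_i(u), τ_j(v)) ≤ 3d` iff `u` and `v` are orthogonal. -/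
theorem rkLCSS_gadget_hamming {d : ℕ} (u v : Fin d → Bool)
    (ti tj : Bool → List Bool)
    (hlen : ∀ a b, (ti a).length = (tj b).length)
    (hdist : ∀ a b : Bool, listHamming (ti a) (tj b) = if a ∧ b then 5 else 3) :
    listHamming ((List.ofFn u).flatMap ti) ((List.ofFn v).flatMap tj) =
      3 * d + 2 * (Finset.univ.filter (fun p : Fin d => u p = true ∧ v p = true)).card ∧
    (listHamming ((List.ofFn u).flatMap ti) ((List.ofFn v).flatMap tj) ≤ 3 * d ↔
      ∀ p : Fin d, ¬ (u p = true ∧ v p = true)) := by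
  have hsum : listHamming ((List.ofFn u).flatMap ti) ((List.ofFn v).flatMap tj) =
      3 * d + 2 * (Finset.univ.filter (fun p : Fin d => u p = true ∧ v p = true)).card := by
    calc _ = ∑ p, listHamming (ti (u p)) (tj (v p)) := listHamming_ofFn_flatMap u v ti tj hlen
      _ = ∑ p : Fin d, (if u p ∧ v p then 3 + 2 else 3) := Finset.sum_congr rfl fun p _ => hdist _ _
      _ = _ := by rw [sum_ite_add_eq_mul_card_add_mul_card_filter, Fintype.card_fin]
  refine ⟨hsum, ?_⟩
  rw [hsum, add_le_iff_nonpos_right, nonpos_iff_eq_zero, mul_eq_zero, or_iff_right two_ne_zero,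
    Finset.card_eq_zero, Finset.filter_eq_empty_iff]
  simp only [Finset.mem_univ, forall_const]
end
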